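/- arXiv:2409.20211 — 2 statements merged into one kernel-verified Lean document; each statement's English description precedes it below -/
import Mathlib

section
/- Let f be a Boolean function of degree r in n variables and let A be an affine subspace of F_2^n of co-dimension k. Then rank_{r-1}(f|_A) ≤ min(n - k, rank_{r-1}(f)), where f|_A is viewed as a Boolean function in n - k variables. -/
open Finset

/-- A Boolean function in `n` variables. -/
abbrev BF (n : ℕ) := (Fin n → ZMod 2) → ZMod 2

/-- The coefficient, in the algebraic normal form of `f`, of the monomial whose
set of variables is `S` (computed by the Möbius/binary Möbius transform). -/
def anf {n : ℕ} (f : BF n) (S : Finset (Fin n)) : ZMod 2 :=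
  ∑ T ∈ S.powerset, f (fun i => if i ∈ T then 1 else 0)

/-- The algebraic degree of a Boolean function, with `⊥` (i.e. `-∞`) for the zero function. -/
def degB {n : ℕ} (f : BF n) : WithBot ℕ :=
  (Finset.univ.filter (fun S : Finset (Fin n) => anf f S ≠ 0)).sup
    (fun S => (S.card : WithBot ℕ))

/-- `f` is homogeneous of degree `r`: all monomials of its ANF have degree `r`. -/
def Homog {n : ℕ} (f : BF n) (r : ℕ) : Prop :=
  ∀ S : Finset (Fin n), anf f S ≠ 0 → S.card = r

/-- `φ` is an affine map. -/
def IsAffineMap {n m : ℕ} (φ : (Fin m → ZMod 2) → (Fin n → ZMod 2)) : Prop :=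
  ∃ (L : (Fin m → ZMod 2) →ₗ[ZMod 2] (Fin n → ZMod 2)) (b : Fin n → ZMod 2),
    φ = fun x => L x + b

/-- `A` is a degree-drop affine subspace of co-dimension `k` for `f` : `A` is the range of an
injective affine parametrization `φ` defined on `F_2^{n-k}`, and the restriction `f|_A`,
viewed as the Boolean function `f ∘ φ` in `n-k` variables, has degree `< deg f`. -/
def DegreeDropSet {n : ℕ} (f : BF n) (k : ℕ) (A : Set (Fin n → ZMod 2)) : Prop :=
  ∃ φ : (Fin (n - k) → ZMod 2) → (Fin n → ZMod 2),
    IsAffineMap φ ∧ Function.Injective φ ∧ Set.range φ = A ∧ degB (f ∘ φ) < degB f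

/-- `f` has some degree-drop affine subspace of co-dimension `k`. -/
def HasDDS {n : ℕ} (f : BF n) (k : ℕ) : Prop :=
  ∃ A : Set (Fin n → ZMod 2), DegreeDropSet f k A

/-- `SimEq r f g` is the relation `f ∼_{r-1} g` : there are an invertible affine
transformation `x ↦ L x + b` of `F_2^n` and a Boolean function `h` of degree at most `r-1`
such that `g = f ∘ φ + h`. -/
def SimEq {n : ℕ} (r : ℕ) (f g : BF n) : Prop :=
  ∃ (L : (Fin n → ZMod 2) ≃ₗ[ZMod 2] (Fin n → ZMod 2)) (b : Fin n → ZMod 2) (h : BF n),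
    degB h ≤ ((r - 1 : ℕ) : WithBot ℕ) ∧ g = fun x => f (L x + b) + h x

/-- The complement `f^c` of a (homogeneous) Boolean function: each monomial `m` of the ANF
is replaced by the monomial on the complementary set of variables. -/
def bcompl {n : ℕ} (f : BF n) : BF n :=
  fun x => ∑ S ∈ Finset.univ.filter (fun S : Finset (Fin n) => anf f S ≠ 0), ∏ i ∈ Sᶜ, x i

/-- Discrete derivative of `f` in direction `a`. -/
def deriv1 {n : ℕ} (a : Fin n → ZMod 2) (f : BF n) : BF n :=
  fun x => f (x + a) + f x

/-- `a` is a fast point of `f` : `a ≠ 0` and `deg (D_a f) < deg f - 1`. -/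
def FastPoint {n : ℕ} (f : BF n) (a : Fin n → ZMod 2) : Prop :=
  a ≠ 0 ∧ degB (deriv1 a f) + 1 < degB f

/-- Membership in `K_{k,r,n}` : `f` is a nonzero homogeneous Boolean function of degree `r`
in `n` variables with no degree-drop affine subspace of co-dimension `k`. -/
def memK {n : ℕ} (k r : ℕ) (f : BF n) : Prop :=
  Homog f r ∧ degB f = (r : WithBot ℕ) ∧ ¬ HasDDS f k

/-- The restriction degree stability of `f` : the largest `k` such that `f` has no
degree-drop affine subspace of co-dimension `k`. -/
noncomputable def degStab {n : ℕ} (f : BF n) : ℕ :=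
  sSup {k : ℕ | ¬ HasDDS f k}

/-- `deg_stab(r,n)` : the maximum of `degStab f` over all Boolean functions `f` of
degree `r` in `n` variables. -/
noncomputable def degStabRN (r n : ℕ) : ℕ :=
  sSup {d : ℕ | ∃ f : BF n, degB f = (r : WithBot ℕ) ∧ d = degStab f}

/-- `g` depends only on the variables in `S`. -/
def DependsOnlyOn {n : ℕ} (g : BF n) (S : Finset (Fin n)) : Prop :=
  ∀ x y : Fin n → ZMod 2, (∀ i ∈ S, x i = y i) → g x = g y

/-- `rank_{r-1}(f)` : the minimum `m` such that some Boolean function `g` depending on only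
`m` of the variables satisfies `f ∼_{r-1} g`. -/
noncomputable def rankB {n : ℕ} (r : ℕ) (f : BF n) : ℕ :=
  sInf {m : ℕ | ∃ g : BF n, SimEq r f g ∧
    ∃ S : Finset (Fin n), S.card = m ∧ DependsOnlyOn g S}

/-- Iterated discrete derivative `D_{a_1}(D_{a_2}(⋯ D_{a_k} f))` along a list of directions. -/
def derivList {n : ℕ} : List (Fin n → ZMod 2) → BF n → BF n
  | [], f => f
  | a :: l, f => deriv1 a (derivList l f)

/-! Restricting `f` to `A` is precomposing it with an affine parametrization `φ`. Precomposition
with an affine map does not raise the algebraic degree, since a product of `d` affine forms has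
degree at most `d`. So if `f ∘ (L · + b) = g + h` with `deg h ≤ r - 1` and `g` depending only on
the coordinates in `S`, then `f ∘ φ ∼_{r-1} g ∘ θ` for `θ = L⁻¹ (φ · + b)`. Now `g ∘ θ` is
invariant under translations by the kernel of `x ↦ (θ x)|_S`, a subspace of codimension at most
`|S|`, hence depends on at most `|S|` variables in suitable linear coordinates. -/

def monoB {n : ℕ} (S : Finset (Fin n)) : BF n := fun x => ∏ i ∈ S, x i

def degLE (n d : ℕ) : Submodule (ZMod 2) (BF n) :=
  Submodule.span (ZMod 2) (monoB '' {S | S.card ≤ d})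

section ANF

variable {n : ℕ}

def anfₗ : BF n →ₗ[ZMod 2] Finset (Fin n) → ZMod 2 where
  toFun := anf
  map_add' f g := by funext S; simp only [anf, Pi.add_apply, Finset.sum_add_distrib]
  map_smul' c f := by funext S; simp only [anf, Pi.smul_apply, smul_eq_mul, Finset.mul_sum,
    RingHom.id_apply]

lemma anfₗ_apply (f : BF n) : anfₗ f = anf f := rfl

lemma monoB_indicator (U T : Finset (Fin n)) :
    monoB U (fun i => if i ∈ T then 1 else 0) = if U ⊆ T then 1 else 0 := by
  split_ifs with h
  · exact Finset.prod_eq_one fun i hi => by simp [h hi]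
  · obtain ⟨i, hiU, hiT⟩ := Finset.not_subset.mp h
    exact Finset.prod_eq_zero hiU (by simp [hiT])

lemma anf_monoB (U S : Finset (Fin n)) : anf (monoB U) S = if U = S then 1 else 0 := by
  simp only [anf, monoB_indicator, Finset.sum_boole]
  by_cases hUS : U ⊆ S
  · have hIcc : S.powerset.filter (U ⊆ ·) = Finset.Icc U S := by
      ext T; simp [and_comm]
    rw [hIcc, Finset.card_Icc_finset hUS]
    rcases hUS.eq_or_ssubset with rfl | hlt
    · simp
    · have h2 : (2 : ZMod 2) = 0 := rfl
      rw [if_neg hlt.ne, Nat.cast_pow, Nat.cast_ofNat, h2,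
        zero_pow (Nat.sub_ne_zero_of_lt (Finset.card_lt_card hlt))]
  · have hempty : S.powerset.filter (U ⊆ ·) = ∅ :=
      Finset.filter_false_of_mem fun T hT hUT => hUS (hUT.trans (Finset.mem_powerset.mp hT))
    simp only [hempty, Finset.card_empty, Nat.cast_zero]
    rw [if_neg (by rintro rfl; exact hUS subset_rfl)]

lemma anf_sum_smul_monoB (c : Finset (Fin n) → ZMod 2) :
    anf (∑ S, c S • monoB S) = c := by
  rw [← anfₗ_apply, map_sum]
  funext U
  simp [map_smul, anfₗ_apply, anf_monoB]

/-- `anf` is onto (by `anf_sum_smul_monoB`) between finite sets of the same size `2 ^ 2 ^ n`. -/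
lemma anf_injective : Function.Injective (anf : BF n → Finset (Fin n) → ZMod 2) := by
  have hsurj : Function.Surjective (anf : BF n → _) := fun c => ⟨_, anf_sum_smul_monoB c⟩
  refine (Fintype.bijective_iff_surjective_and_card _).mpr ⟨hsurj, ?_⟩ |>.injective
  simp [Fintype.card_finset]

lemma sum_anf_smul_monoB (f : BF n) : ∑ S, anf f S • monoB S = f :=
  anf_injective (anf_sum_smul_monoB _)

lemma degB_le_iff {f : BF n} {d : ℕ} :
    degB f ≤ d ↔ ∀ S : Finset (Fin n), anf f S ≠ 0 → S.card ≤ d := by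
  simp [degB, Finset.sup_le_iff]

lemma degB_le_iff_mem_degLE {f : BF n} {d : ℕ} : degB f ≤ d ↔ f ∈ degLE n d := by
  rw [degB_le_iff]
  constructor
  · intro hf
    rw [← sum_anf_smul_monoB f]
    refine Submodule.sum_mem _ fun S _ => ?_
    by_cases h0 : anf f S = 0
    · simp [h0]
    · exact Submodule.smul_mem _ _ (Submodule.subset_span ⟨S, hf S h0, rfl⟩)
  · intro hf
    induction hf using Submodule.span_induction with
    | mem f hf =>
      obtain ⟨U, hU, rfl⟩ := hf
      intro S hS
      rw [anf_monoB] at hS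
      split_ifs at hS with h
      · exact h ▸ hU
      · exact absurd rfl hS
    | zero => simp [anf]
    | add f g _ _ hf hg =>
      intro S hS
      rw [← anfₗ_apply, map_add] at hS
      by_cases h : anf f S = 0
      · exact hg S (by simpa [anfₗ_apply, h] using hS)
      · exact hf S h
    | smul c f _ hf =>
      intro S hS
      rw [← anfₗ_apply, map_smul] at hS
      exact hf S fun h => hS (by simp [anfₗ_apply, h])

end ANF

lemma monoB_mul {n : ℕ} (S T : Finset (Fin n)) : monoB S * monoB T = monoB (S ∪ T) := by
  funext x
  have hidem : ∀ a : ZMod 2, a * a = a := by decide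
  have hsplit := Finset.prod_sdiff (f := x) (Finset.inter_subset_union (s := S) (t := T))
  simp only [Pi.mul_apply, monoB]
  rw [← Finset.prod_union_inter, ← hsplit, mul_assoc, ← Finset.prod_mul_distrib]
  simp only [hidem]

lemma degLE_mono {n a b : ℕ} (h : a ≤ b) : degLE n a ≤ degLE n b :=
  Submodule.span_mono (Set.image_mono fun _ hS => le_trans hS h)

lemma degLE_mul_le {n a b : ℕ} : degLE n a * degLE n b ≤ degLE n (a + b) := by
  rw [degLE, degLE, Submodule.span_mul_span]
  refine Submodule.span_le.mpr ?_
  rintro _ ⟨_, ⟨S, hS, rfl⟩, _, ⟨T, hT, rfl⟩, rfl⟩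
  exact Submodule.subset_span
    ⟨S ∪ T, (Finset.card_union_le S T).trans (add_le_add hS hT), (monoB_mul S T).symm⟩

lemma IsAffineMap.comp {m n p : ℕ} {φ : (Fin m → ZMod 2) → (Fin n → ZMod 2)}
    {c : (Fin p → ZMod 2) → (Fin m → ZMod 2)}
    (hφ : IsAffineMap φ) (hc : IsAffineMap c) : IsAffineMap (φ ∘ c) := by
  obtain ⟨L₁, b₁, rfl⟩ := hφ
  obtain ⟨L₂, b₂, rfl⟩ := hc
  exact ⟨L₁.comp L₂, L₁ b₂ + b₁, by funext x; simp [add_assoc]⟩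

lemma IsAffineMap.coord_mem_degLE {m n : ℕ} {φ : (Fin m → ZMod 2) → (Fin n → ZMod 2)}
    (hφ : IsAffineMap φ) (i : Fin n) : (fun x => φ x i) ∈ degLE m 1 := by
  obtain ⟨L, b, rfl⟩ := hφ
  have hexpand : (fun x => (L x + b) i) =
      ∑ j, L (fun k => if j = k then 1 else 0) i • monoB {j} + b i • monoB ∅ := by
    funext x
    simp [monoB, LinearMap.pi_apply_eq_sum_univ L x, Finset.sum_apply, mul_comm]
  rw [hexpand]
  refine add_mem (Submodule.sum_mem _ fun j _ => ?_) ?_ <;>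
    exact Submodule.smul_mem _ _ (Submodule.subset_span ⟨_, by simp, rfl⟩)

lemma monoB_comp_mem_degLE {m n : ℕ} {φ : (Fin m → ZMod 2) → (Fin n → ZMod 2)}
    (hφ : IsAffineMap φ) (S : Finset (Fin n)) : monoB S ∘ φ ∈ degLE m S.card := by
  classical
  induction S using Finset.induction_on with
  | empty => exact Submodule.subset_span ⟨∅, by simp, rfl⟩
  | insert i S hi ih =>
    have hmul : monoB (insert i S) ∘ φ = (fun x => φ x i) * (monoB S ∘ φ) := by
      funext x; simp [monoB, Finset.prod_insert hi]
    rw [hmul, Finset.card_insert_of_notMem hi, add_comm]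
    exact degLE_mul_le (Submodule.mul_mem_mul (hφ.coord_mem_degLE i) ih)

lemma comp_mem_degLE {m n d : ℕ} {f : BF n} (hf : f ∈ degLE n d)
    {φ : (Fin m → ZMod 2) → (Fin n → ZMod 2)} (hφ : IsAffineMap φ) : f ∘ φ ∈ degLE m d := by
  suffices degLE n d ≤ (degLE m d).comap (LinearMap.funLeft (ZMod 2) (ZMod 2) φ) from this hf
  refine Submodule.span_le.mpr ?_
  rintro _ ⟨S, hS, rfl⟩
  exact degLE_mono hS (monoB_comp_mem_degLE hφ S)

lemma degB_comp_le {m n d : ℕ} {f : BF n} (hf : degB f ≤ d)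
    {φ : (Fin m → ZMod 2) → (Fin n → ZMod 2)} (hφ : IsAffineMap φ) : degB (f ∘ φ) ≤ d :=
  degB_le_iff_mem_degLE.mpr (comp_mem_degLE (degB_le_iff_mem_degLE.mp hf) hφ)

section Rank

/-- Coordinates: a basis of `W` followed by a basis of a complement. -/
lemma exists_linearEquiv_dependsOnlyOn_of_add_mem {M : ℕ} (G : BF M)
    (W : Submodule (ZMod 2) (Fin M → ZMod 2)) (hG : ∀ x, ∀ w ∈ W, G (x + w) = G x) :
    ∃ (E : (Fin M → ZMod 2) ≃ₗ[ZMod 2] (Fin M → ZMod 2)) (S : Finset (Fin M)),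
      S.card + Module.finrank (ZMod 2) W = M ∧ DependsOnlyOn (G ∘ E) S := by
  obtain ⟨U, hWU⟩ := Submodule.exists_isCompl W
  have hdim : Module.finrank (ZMod 2) W + Module.finrank (ZMod 2) U = M := by
    simpa using Submodule.finrank_add_eq_of_isCompl hWU
  set e := finSumFinEquiv.trans (finCongr hdim)
  set B := (((Module.finBasis (ZMod 2) W).prod (Module.finBasis (ZMod 2) U)).map
    (Submodule.prodEquivOfIsCompl W U hWU)).reindex e
  have hBW : ∀ i, B (e (Sum.inl i)) ∈ W := fun i => by simp [B]
  refine ⟨B.equivFun.symm, Finset.univ.map (Function.Embedding.inr.trans e.toEmbedding),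
    by simpa [add_comm] using hdim, fun x y hxy => ?_⟩
  have hdiff : B.equivFun.symm x - B.equivFun.symm y ∈ W := by
    rw [← map_sub, Module.Basis.equivFun_symm_apply]
    refine Submodule.sum_mem _ fun j _ => ?_
    obtain ⟨i | i, rfl⟩ := e.surjective j
    · exact Submodule.smul_mem _ _ (hBW i)
    · have : x (e (Sum.inr i)) = y (e (Sum.inr i)) := hxy _ (by simp)
      simp [this]
  change G (B.equivFun.symm x) = G (B.equivFun.symm y)
  rw [← hG (B.equivFun.symm y) _ hdiff, add_sub_cancel]

lemma DependsOnlyOn.exists_comp_affine {M N : ℕ} {g : BF N} {S : Finset (Fin N)}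
    (hg : DependsOnlyOn g S) {θ : (Fin M → ZMod 2) → (Fin N → ZMod 2)} (hθ : IsAffineMap θ) :
    ∃ (E : (Fin M → ZMod 2) ≃ₗ[ZMod 2] (Fin M → ZMod 2)) (S' : Finset (Fin M)),
      S'.card ≤ S.card ∧ DependsOnlyOn (g ∘ θ ∘ E) S' := by
  obtain ⟨A, b, rfl⟩ := hθ
  set Λ := (LinearMap.funLeft (ZMod 2) (ZMod 2) (Subtype.val : S → Fin N)).comp A
  have hinv : ∀ x, ∀ w ∈ LinearMap.ker Λ, g (A (x + w) + b) = g (A x + b) := by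
    intro x w hw
    refine hg _ _ fun i hi => ?_
    have : A w i = 0 := congrFun (LinearMap.mem_ker.mp hw) ⟨i, hi⟩
    simp [this]
  obtain ⟨E, S', hS', hdep⟩ :=
    exists_linearEquiv_dependsOnlyOn_of_add_mem (fun x => g (A x + b)) _ hinv
  have hrank : Module.finrank (ZMod 2) (LinearMap.range Λ) ≤ S.card := by
    simpa using Submodule.finrank_le (LinearMap.range Λ)
  have := LinearMap.finrank_range_add_finrank_ker Λ
  exact ⟨E, S', by simp at this; omega, hdep⟩

variable {n : ℕ}

lemma dependsOnlyOn_univ (g : BF n) : DependsOnlyOn g Finset.univ :=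
  fun _ _ hxy => congrArg g (funext fun i => hxy i (Finset.mem_univ i))

lemma simEq_refl (r : ℕ) (f : BF n) : SimEq r f f :=
  ⟨LinearEquiv.refl _ _, 0, 0, degB_le_iff.mpr fun S hS => absurd (by simp [anf]) hS,
    by funext x; simp⟩

lemma rankB_le_card {r : ℕ} {f g : BF n} (hfg : SimEq r f g) {S : Finset (Fin n)}
    (hg : DependsOnlyOn g S) : rankB r f ≤ S.card :=
  Nat.sInf_le ⟨g, hfg, S, rfl, hg⟩

lemma rankB_le (r : ℕ) (f : BF n) : rankB r f ≤ n := by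
  simpa using rankB_le_card (simEq_refl r f) (dependsOnlyOn_univ f)

lemma exists_simEq_dependsOnlyOn_rankB (r : ℕ) (f : BF n) :
    ∃ g : BF n, SimEq r f g ∧ ∃ S : Finset (Fin n), S.card = rankB r f ∧ DependsOnlyOn g S :=
  Nat.sInf_mem (s := {m | ∃ g : BF n, SimEq r f g ∧
      ∃ S : Finset (Fin n), S.card = m ∧ DependsOnlyOn g S})
    ⟨n, f, simEq_refl r f, Finset.univ, by simp, dependsOnlyOn_univ f⟩

lemma rankB_comp_le {m : ℕ} (r : ℕ) (f : BF n) {φ : (Fin m → ZMod 2) → (Fin n → ZMod 2)}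
    (hφ : IsAffineMap φ) : rankB r (f ∘ φ) ≤ rankB r f := by
  obtain ⟨_, ⟨L, b, h, hh, rfl⟩, S, hS, hdep⟩ := exists_simEq_dependsOnlyOn_rankB r f
  set θ := fun x => L.symm (φ x + b)
  have hθ : IsAffineMap θ := by
    obtain ⟨Lφ, bφ, rfl⟩ := hφ
    exact ⟨L.symm.toLinearMap.comp Lφ, L.symm (bφ + b), by funext x; simp [θ, add_assoc]⟩
  obtain ⟨E, S', hS', hdep'⟩ := hdep.exists_comp_affine hθ
  have hEθ : IsAffineMap (θ ∘ E) := hθ.comp ⟨E.toLinearMap, 0, by funext x; simp⟩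
  have hsim : SimEq r (f ∘ φ) ((fun y => f (L y + b) + h y) ∘ θ ∘ E) :=
    ⟨E, 0, h ∘ θ ∘ E, degB_comp_le hh hEθ, by
      have hbb : b + b = 0 := funext fun i => CharTwo.add_self_eq_zero (b i)
      funext x; simp [θ, add_assoc, hbb]⟩
  exact (rankB_le_card hsim hdep').trans (hS'.trans hS.le)

end Rank

theorem stmt12_general {n r k : ℕ}
    (f : BF n)
    (φ : (Fin (n - k) → ZMod 2) → (Fin n → ZMod 2))
    (hφ : IsAffineMap φ) :
    rankB r (f ∘ φ) ≤ min (n - k) (rankB r f) :=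
  le_min (rankB_le r _) (rankB_comp_le r f hφ)

/-- for a function `f` of degree `r` in `n` variables and an affine subspace
`A` of co-dimension `k` (given by an injective affine parametrization `φ` of `F₂^{n-k}`),
the restriction `f|_A = f ∘ φ`, viewed in `n-k` variables, satisfies
`rank_{r-1}(f|_A) ≤ min (n-k) (rank_{r-1} f)`. -/
theorem stmt12 {n r k : ℕ} (hk : k ≤ n)
    (f : BF n) (hdeg : degB f = (r : WithBot ℕ))
    (φ : (Fin (n - k) → ZMod 2) → (Fin n → ZMod 2))
    (hφ : IsAffineMap φ) (hinj : Function.Injective φ) :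
    rankB r (f ∘ φ) ≤ min (n - k) (rankB r f) :=
  stmt12_general f φ hφ
end

section
/- Let f be a symmetric Boolean function in n variables of algebraic degree r with 2 ≤ r ≤ n-2. (i) If r is even, then f has no degree-drop hyperplane. (ii) If r is odd, then f has exactly one degree-drop linear hyperplane, namely the hyperplane of equation x_1 + x_2 + ⋯ + x_n = 0. -/
open Finset

/-!
Write `F k` for the value of the symmetric function `f` at any point of Hamming weight `k`,
and `Δ` for the forward difference on `ℕ`. The ANF coefficient of a monomial of degree `k` is
the sum of `f` over a `k`-dimensional coordinate cube, namely `Δ^k F 0`; so `deg f = r` means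
`Δ^r F 0 ≠ 0` and `Δ^k F 0 = 0` for `r < k ≤ n`, whence also `Δ^r F 1 = Δ^r F 0 ≠ 0`.

A function of degree `< r` sums to zero over every `r`-dimensional affine cube. Inside the
hyperplane `a ⬝ᵥ x = ε` we build an `r`-dimensional cube from a point `w` of the support of `a`,
an even number `u` of "legs" `e_p + e_w` with `p` in the support of `a`, and `r - u` coordinate
directions outside it. A pair of legs sums like two coordinate directions, so the cube sum of
`f` is `Δ^r F ε ≠ 0` and the restriction of `f` keeps degree `r`. Such a `u` exists unless `r`
is odd and `a = 1`. Conversely, parametrizing `∑ x = 0` by `z ↦ (∑ z, z)` turns every coordinate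
direction into a leg, and the ANF coefficients of the restriction of degree `≥ r` become
`Δ^s F 0` with `s` even, hence `s > r` as `r` is odd: all zero.
-/

open Finset fwdDiff

lemma zmod2_eq_zero_or_eq_one (c : ZMod 2) : c = 0 ∨ c = 1 := by
  revert c; decide

lemma sum_zmod_two {M : Type*} [AddCommMonoid M] (h : ZMod 2 → M) : ∑ c, h c = h 0 + h 1 :=
  Fin.sum_univ_two h

lemma hammingNorm_add_single_of_eq_zero {ι R : Type*} [Fintype ι] [DecidableEq ι]
    [AddZeroClass R] [DecidableEq R] {x : ι → R} {i : ι} {c : R} (hc : c ≠ 0) (hi : x i = 0) :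
    hammingNorm (x + Pi.single i c) = hammingNorm x + 1 := by
  unfold hammingNorm
  rw [← card_insert_of_notMem (by simp [hi] : i ∉ univ.filter (x · ≠ 0))]
  congr 1
  ext j
  by_cases hj : j = i
  · subst hj; simp [hi, hc]
  · simp [hj]

lemma hammingNorm_single_le_one {ι R : Type*} [Fintype ι] [DecidableEq ι] [Zero R]
    [DecidableEq R] (i : ι) (c : R) : hammingNorm (Pi.single i c : ι → R) ≤ 1 :=
  card_le_one.2 fun j hj k hk => by
    simp only [mem_filter, Pi.single_apply] at hj hk
    split_ifs at hj hk <;> simp_all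

lemma fwdDiff_iter_two_apply (G : ℕ → ZMod 2) (k : ℕ) :
    (Δ_[1])^[2] G k = G (k + 2) + G k := by
  simp only [Function.iterate_succ, Function.iterate_zero, Function.comp_apply, id]
  simp only [fwdDiff, ZModModule.sub_eq_add, add_assoc, ← add_assoc (G (k + 1)),
    ZModModule.add_self, zero_add]

section AlgebraicNormalForm

variable {n : ℕ}

lemma sum_anf_powerset (g : BF n) (U : Finset (Fin n)) :
    ∑ S ∈ U.powerset, anf g S = g (fun i => if i ∈ U then 1 else 0) := by
  simp only [anf]
  rw [sum_comm' (t' := U.powerset) (s' := fun T => Icc T U) fun S T => by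
    simp only [mem_powerset, mem_Icc]
    exact ⟨fun h => ⟨⟨h.2, h.1⟩, h.2.trans h.1⟩, fun h => ⟨h.1.2, h.1.1⟩⟩]
  rw [sum_eq_single_of_mem U (mem_powerset_self U)]
  · simp
  · intro T hT hTU
    have hlt : T.card < U.card :=
      card_lt_card (ssubset_of_subset_of_ne (mem_powerset.1 hT) hTU)
    -- each `g (1_T)` with `T ⊊ U` is counted `2 ^ (|U| - |T|)` times
    rw [sum_const, card_Icc_finset (mem_powerset.1 hT), nsmul_eq_mul, Nat.cast_pow,
      Nat.cast_ofNat, show (2 : ZMod 2) = 0 from rfl, zero_pow (by omega), zero_mul]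

lemma prod_eq_ite_subset_support (x : Fin n → ZMod 2) (S : Finset (Fin n)) :
    ∏ i ∈ S, x i = if S ⊆ univ.filter (x · ≠ 0) then 1 else 0 := by
  split_ifs with h
  · exact prod_eq_one fun i hi =>
      (zmod2_eq_zero_or_eq_one (x i)).resolve_left (mem_filter.1 (h hi)).2
  · obtain ⟨i, hiS, hi⟩ := not_subset.1 h
    exact prod_eq_zero hiS (by simpa using hi)

theorem eq_sum_anf_mul_prod (g : BF n) (x : Fin n → ZMod 2) :
    g x = ∑ S, anf g S * ∏ i ∈ S, x i := by
  set U := univ.filter (x · ≠ 0)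
  have hx : x = fun i => if i ∈ U then 1 else 0 := by
    funext i
    rcases zmod2_eq_zero_or_eq_one (x i) with h | h <;> simp [U, h]
  simp_rw [prod_eq_ite_subset_support, mul_ite, mul_one, mul_zero, ← sum_filter]
  rw [hx, ← sum_anf_powerset g U]
  congr 1
  ext S
  simp

theorem degB_lt_iff (g : BF n) (k : ℕ) :
    degB g < k ↔ ∀ S, anf g S ≠ 0 → S.card < k := by
  simp [degB]

theorem exists_anf_ne_zero_of_degB_eq {g : BF n} {r : ℕ} (h : degB g = r) :
    ∃ S, S.card = r ∧ anf g S ≠ 0 := by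
  obtain ⟨S, hS, hSr⟩ := exists_mem_eq_sup (univ.filter fun S => anf g S ≠ 0)
    (nonempty_iff_ne_empty.2 fun he => by simp [degB, he] at h)
    (fun S : Finset (Fin n) => (S.card : WithBot ℕ))
  exact ⟨S, by exact_mod_cast hSr.symm.trans h, (mem_filter.1 hS).2⟩

theorem sum_prod_affine_eq_zero {k : ℕ} (L : (Fin k → ZMod 2) →ₗ[ZMod 2] (Fin n → ZMod 2))
    (b : Fin n → ZMod 2) (S : Finset (Fin n)) (hS : S.card < k) :
    ∑ z, ∏ i ∈ S, (L z + b) i = 0 := by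
  let Λ : (Fin k → ZMod 2) →ₗ[ZMod 2] (S → ZMod 2) :=
    LinearMap.pi fun i => (LinearMap.proj (i : Fin n)).comp L
  have hker : LinearMap.ker Λ ≠ ⊥ := fun hbot => by
    have := LinearMap.finrank_le_finrank_of_injective (LinearMap.ker_eq_bot.1 hbot)
    simp only [Module.finrank_fintype_fun_eq_card, Fintype.card_fin, Fintype.card_coe] at this
    omega
  obtain ⟨a, haK, ha0⟩ := Submodule.exists_mem_ne_zero_of_ne_bot hker
  have hLa : ∀ i ∈ S, L a i = 0 := fun i hi => congrFun haK ⟨i, hi⟩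
  -- `z ↦ z + a` pairs up equal terms
  refine sum_involution (fun z _ => z + a) (fun z _ => ?_)
    (fun z _ _ h => ha0 (by simpa using h)) (fun _ _ => mem_univ _)
    (fun z _ => by simp [add_assoc, ZModModule.add_self])
  rw [show ∏ i ∈ S, (L (z + a) + b) i = ∏ i ∈ S, (L z + b) i from
    prod_congr rfl fun i hi => by simp [hLa i hi], ZModModule.add_self]

theorem sum_comp_affine_eq_zero (g : BF n) {k : ℕ} (hg : degB g < k)
    (L : (Fin k → ZMod 2) →ₗ[ZMod 2] (Fin n → ZMod 2)) (b : Fin n → ZMod 2) :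
    ∑ z, g (L z + b) = 0 := by
  simp_rw [eq_sum_anf_mul_prod g (L _ + b)]
  rw [sum_comm]
  refine sum_eq_zero fun S _ => ?_
  by_cases hS : anf g S = 0
  · simp [hS]
  · rw [← mul_sum, sum_prod_affine_eq_zero L b S ((degB_lt_iff g k).1 hg S hS), mul_zero]

end AlgebraicNormalForm

section Derivatives

variable {n : ℕ}

theorem derivList_append (l₁ l₂ : List (Fin n → ZMod 2)) (g : BF n) :
    derivList (l₁ ++ l₂) g = derivList l₁ (derivList l₂ g) := by
  induction l₁ with
  | nil => rfl
  | cons d l ih => simp [derivList, ih]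

theorem derivList_ofFn (g : BF n) {k : ℕ} (d : Fin k → Fin n → ZMod 2) (x : Fin n → ZMod 2) :
    derivList (List.ofFn d) g x = ∑ z : Fin k → ZMod 2, g (x + ∑ i, z i • d i) := by
  induction k generalizing x with
  | zero => simp [derivList]
  | succ k ih =>
    rw [List.ofFn_succ, derivList, deriv1, ih, ih,
      ← (Fin.consEquiv fun _ => ZMod 2).sum_comp, Fintype.sum_prod_type]
    simp only [Fin.consEquiv_apply, Fin.sum_univ_succ, Fin.cons_zero, Fin.cons_succ]
    rw [sum_zmod_two]
    simp [add_assoc, add_comm]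

theorem derivList_eq_zero_of_degB_lt {g : BF n} {l : List (Fin n → ZMod 2)}
    (hg : degB g < l.length) (x : Fin n → ZMod 2) : derivList l g x = 0 := by
  conv_lhs => rw [← List.ofFn_get l]
  rw [derivList_ofFn]
  simpa [Fintype.linearCombination_apply, add_comm] using
    sum_comp_affine_eq_zero g hg (Fintype.linearCombination (ZMod 2) l.get) x

theorem derivList_comp_affine {m : ℕ} (g : BF n)
    (L : (Fin m → ZMod 2) →ₗ[ZMod 2] (Fin n → ZMod 2)) (b : Fin n → ZMod 2)
    (l : List (Fin m → ZMod 2)) (y : Fin m → ZMod 2) :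
    derivList l (g ∘ fun y => L y + b) y = derivList (l.map L) g (L y + b) := by
  induction l generalizing y with
  | nil => rfl
  | cons d l ih => simp only [derivList, deriv1, ih, List.map_cons, map_add, add_right_comm]

theorem derivList_eq_zero_of_mem_range {m : ℕ} (g : BF n)
    (L : (Fin m → ZMod 2) →ₗ[ZMod 2] (Fin n → ZMod 2)) (b : Fin n → ZMod 2)
    {l : List (Fin n → ZMod 2)} (hg : degB (g ∘ fun y => L y + b) < l.length)
    {x : Fin n → ZMod 2} (hx : x ∈ Set.range fun y => L y + b)
    (hl : ∀ d ∈ l, d ∈ LinearMap.range L) : derivList l g x = 0 := by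
  obtain ⟨l', rfl⟩ : l ∈ Set.range (List.map L) := by rw [Set.range_list_map]; exact hl
  obtain ⟨y, rfl⟩ := hx
  rw [← derivList_comp_affine]
  exact derivList_eq_zero_of_degB_lt (by simpa using hg) y

theorem sum_powerset_eq_derivList (g : BF n) (l : List (Fin n)) (hl : l.Nodup)
    (x : Fin n → ZMod 2) :
    ∑ T ∈ l.toFinset.powerset, g (x + fun i => if i ∈ T then 1 else 0) =
      derivList (l.map fun i => Pi.single i 1) g x := by
  induction l generalizing x with
  | nil => simp [derivList, ← Pi.zero_def]
  | cons i l ih =>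
    obtain ⟨hi, hl⟩ := List.nodup_cons.1 hl
    rw [List.toFinset_cons, sum_powerset_insert (by simpa using hi), List.map_cons, derivList,
      deriv1, ← ih hl, ← ih hl, add_comm]
    congr 1
    refine sum_congr rfl fun T hT => congrArg g (funext fun j => ?_)
    have hiT : i ∉ T := fun h => hi (List.mem_toFinset.1 (mem_powerset.1 hT h))
    by_cases hj : j = i
    · subst hj; simp [hiT]
    · simp [hj]

theorem anf_eq_derivList (g : BF n) (S : Finset (Fin n)) :
    anf g S = derivList (S.toList.map fun i => Pi.single i 1) g 0 := by
  rw [← sum_powerset_eq_derivList g _ S.nodup_toList, toList_toFinset]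
  simp [anf]

end Derivatives

section WeightProfiles

variable {n : ℕ}

def IsSymmetricBF (f : BF n) : Prop :=
  ∀ π : Equiv.Perm (Fin n), ∀ x : Fin n → ZMod 2, f (x ∘ π) = f x

def weightProfile (f : BF n) (k : ℕ) : ZMod 2 :=
  f fun i => if (i : ℕ) < k then 1 else 0

def HasWeightProfile (g : BF n) (C : Finset (Fin n)) (G : ℕ → ZMod 2) : Prop :=
  ∀ x : Fin n → ZMod 2, (∀ i ∈ C, x i = 0) → g x = G (hammingNorm x)

def leg (w p : Fin n) : Fin n → ZMod 2 := Pi.single p 1 + Pi.single w 1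

lemma hammingNorm_leg {w p : Fin n} (h : w ≠ p) : hammingNorm (leg w p) = 2 := by
  have h0 : (0 : Fin n → ZMod 2) w = 0 := rfl
  have hw : (Pi.single w 1 : Fin n → ZMod 2) p = 0 := Pi.single_eq_of_ne h.symm 1
  rw [leg, add_comm, hammingNorm_add_single_of_eq_zero one_ne_zero hw,
    ← zero_add (Pi.single w 1), hammingNorm_add_single_of_eq_zero one_ne_zero h0,
    hammingNorm_zero]

theorem IsSymmetricBF.apply_eq_of_hammingNorm_eq {f : BF n} (hf : IsSymmetricBF f)
    {x y : Fin n → ZMod 2} (h : hammingNorm x = hammingNorm y) : f x = f y := by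
  obtain ⟨σ, hσ⟩ := Equiv.Perm.exists_map_finset_eq
    (univ.filter (y · ≠ 0)) (univ.filter (x · ≠ 0)) h.symm
  rw [← hf σ x]
  congr 1
  funext i
  have key : σ i ∈ univ.filter (x · ≠ 0) ↔ i ∈ univ.filter (y · ≠ 0) := by
    rw [← hσ]; exact mem_map' σ.toEmbedding
  simp only [mem_filter, mem_univ, true_and] at key
  show x (σ i) = y i
  revert key
  generalize x (σ i) = a
  generalize y i = b
  revert a b
  decide

lemma hammingNorm_ite_val_lt {k : ℕ} (hk : k ≤ n) :
    hammingNorm (fun i : Fin n => if (i : ℕ) < k then (1 : ZMod 2) else 0) = k := by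
  simp only [hammingNorm, ne_eq, ite_eq_right_iff, one_ne_zero, imp_false, not_not,
    Fin.card_filter_val_lt, min_eq_right hk]

theorem IsSymmetricBF.hasWeightProfile {f : BF n} (hf : IsSymmetricBF f) :
    HasWeightProfile f ∅ (weightProfile f) := fun x _ =>
  hf.apply_eq_of_hammingNorm_eq (hammingNorm_ite_val_lt (by
    simpa using hammingNorm_le_card_fintype (x := x))).symm

variable {g : BF n} {C : Finset (Fin n)} {G : ℕ → ZMod 2}

theorem HasWeightProfile.deriv1_single (hg : HasWeightProfile g C G) {i : Fin n} (hi : i ∉ C) :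
    HasWeightProfile (deriv1 (Pi.single i 1) g) (insert i C) (Δ_[1] G) := by
  intro x hx
  have hxC : ∀ j ∈ C, x j = 0 := fun j hj => hx j (mem_insert_of_mem hj)
  rw [deriv1, hg x hxC, hg _ fun j hj => by simp [ne_of_mem_of_not_mem hj hi, hxC j hj],
    hammingNorm_add_single_of_eq_zero one_ne_zero (hx i (mem_insert_self i C)), fwdDiff,
    ZModModule.sub_eq_add]

theorem HasWeightProfile.deriv1_leg_pair (hg : HasWeightProfile g C G) {w p q : Fin n}
    (hpq : p ≠ q) (hwp : w ≠ p) (hwq : w ≠ q) (hp : p ∉ C) (hq : q ∉ C) (hw : w ∉ C) :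
    HasWeightProfile (deriv1 (leg w p) (deriv1 (leg w q) g)) (insert p (insert q C))
      ((Δ_[1])^[2] G) := by
  intro x hx
  simp only [mem_insert, forall_eq_or_imp] at hx
  obtain ⟨hxp, hxq, hxC⟩ := hx
  have hC : ∀ j ∈ C, j ≠ p ∧ j ≠ q ∧ j ≠ w := fun j hj =>
    ⟨ne_of_mem_of_not_mem hj hp, ne_of_mem_of_not_mem hj hq, ne_of_mem_of_not_mem hj hw⟩
  set y := x + Pi.single w 1
  have hyp : y p = 0 := by simp [y, hxp, hwp]
  have hyq : y q = 0 := by simp [y, hxq, hwq]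
  have hxpq : (x + Pi.single p 1 : Fin n → ZMod 2) q = 0 := by simp [hxq, hpq]
  have hp' : x + leg w p = y + Pi.single p 1 := by simp only [y, leg]; abel
  have hq' : x + leg w q = y + Pi.single q 1 := by simp only [y, leg]; abel
  have hpq' : x + leg w p + leg w q = x + Pi.single p 1 + Pi.single q 1 := by
    simp only [leg]
    linear_combination ZModModule.add_self (Pi.single w 1 : Fin n → ZMod 2)
  simp only [deriv1]
  rw [hpq', hp', hq',
    hg _ fun j hj => by obtain ⟨h1, h2, h3⟩ := hC j hj; simp [h1, h2, hxC j hj],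
    hg _ fun j hj => by obtain ⟨h1, h2, h3⟩ := hC j hj; simp [y, h1, h3, hxC j hj],
    hg _ fun j hj => by obtain ⟨h1, h2, h3⟩ := hC j hj; simp [y, h2, h3, hxC j hj],
    hg x hxC, hammingNorm_add_single_of_eq_zero one_ne_zero hxpq,
    hammingNorm_add_single_of_eq_zero one_ne_zero hxp,
    hammingNorm_add_single_of_eq_zero one_ne_zero hyp,
    hammingNorm_add_single_of_eq_zero one_ne_zero hyq, fwdDiff_iter_two_apply]
  -- `x + leg w p` and `x + leg w q` have the same weight, so their terms cancel
  linear_combination ZModModule.add_self (G (hammingNorm y + 1))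

theorem HasWeightProfile.derivList_singles (hg : HasWeightProfile g C G) (l : List (Fin n))
    (hl : l.Nodup) (hlC : ∀ i ∈ l, i ∉ C) :
    HasWeightProfile (derivList (l.map fun i => Pi.single i 1) g) (C ∪ l.toFinset)
      ((Δ_[1])^[l.length] G) := by
  induction l with
  | nil => simpa [derivList] using hg
  | cons i l ih =>
    obtain ⟨hi, hl⟩ := List.nodup_cons.1 hl
    rw [List.map_cons, List.toFinset_cons, union_insert, List.length_cons,
      Function.iterate_succ']
    exact (ih hl fun j hj => hlC j (List.mem_cons_of_mem i hj)).deriv1_single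
      (by simp [hi, hlC i List.mem_cons_self])

theorem HasWeightProfile.derivList_legs (hg : HasWeightProfile g C G) {w : Fin n} (hw : w ∉ C) :
    ∀ l : List (Fin n), l.Nodup → Even l.length → w ∉ l → (∀ i ∈ l, i ∉ C) →
      HasWeightProfile (derivList (l.map (leg w)) g) (C ∪ l.toFinset) ((Δ_[1])^[l.length] G)
  | [], _, _, _, _ => by simpa [derivList] using hg
  | [_], _, heven, _, _ => absurd heven (by simp)
  | p :: q :: l, hl, heven, hwl, hlC => by
    simp only [List.nodup_cons, List.mem_cons, not_or] at hl hwl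
    obtain ⟨⟨hpq, hpl⟩, hql, hl⟩ := hl
    obtain ⟨hwp, hwq, hwl⟩ := hwl
    have ih := hg.derivList_legs hw l hl (by simpa [parity_simps] using heven) hwl
      fun i hi => hlC i (by simp [hi])
    rw [List.map_cons, List.map_cons, List.toFinset_cons, List.toFinset_cons, union_insert,
      union_insert, show (p :: q :: l).length = 2 + l.length by simp; omega,
      Function.iterate_add_apply]
    exact ih.deriv1_leg_pair hpq hwp hwq (by simp [hpl, hlC p (by simp)])
      (by simp [hql, hlC q (by simp)]) (by simp [hw, hwl])

end WeightProfiles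

section SymmetricFunctions

variable {n : ℕ} {f : BF n}

theorem IsSymmetricBF.anf_eq_fwdDiff_iter (hf : IsSymmetricBF f) (S : Finset (Fin n)) :
    anf f S = (Δ_[1])^[S.card] (weightProfile f) 0 := by
  rw [anf_eq_derivList, hf.hasWeightProfile.derivList_singles S.toList S.nodup_toList (by simp) 0
    (by simp), hammingNorm_zero, length_toList]

theorem IsSymmetricBF.fwdDiff_iter_weightProfile_eq_zero (hf : IsSymmetricBF f) {k : ℕ}
    (hdeg : degB f < k) (hkn : k ≤ n) : (Δ_[1])^[k] (weightProfile f) 0 = 0 := by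
  obtain ⟨S, -, rfl⟩ := exists_subset_card_eq (s := (univ : Finset (Fin n))) (by simpa using hkn)
  rw [← hf.anf_eq_fwdDiff_iter]
  by_contra h
  exact lt_irrefl _ ((degB_lt_iff f _).1 hdeg S h)

theorem IsSymmetricBF.fwdDiff_iter_weightProfile_ne_zero (hf : IsSymmetricBF f) {r : ℕ}
    (hdeg : degB f = r) (hrn : r < n) {j : ℕ} (hj : j ≤ 1) :
    (Δ_[1])^[r] (weightProfile f) j ≠ 0 := by
  obtain ⟨S, hS, hne⟩ := exists_anf_ne_zero_of_degB_eq hdeg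
  rw [hf.anf_eq_fwdDiff_iter, hS] at hne
  interval_cases j
  · exact hne
  · have h := hf.fwdDiff_iter_weightProfile_eq_zero (k := r + 1)
      (by rw [hdeg]; exact_mod_cast r.lt_succ_self) hrn
    rw [Function.iterate_succ_apply', fwdDiff, zero_add, sub_eq_zero] at h
    rwa [h]

theorem IsSymmetricBF.derivList_legs_append_singles (hf : IsSymmetricBF f) {w : Fin n}
    {P V : Finset (Fin n)} (hP : Even P.card) (hPV : Disjoint P V) (hwP : w ∉ P) (hwV : w ∉ V)
    {x : Fin n → ZMod 2} (hx : ∀ i ∈ P ∪ V, x i = 0) :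
    derivList (P.toList.map (leg w) ++ V.toList.map fun i => Pi.single i 1) f x =
      (Δ_[1])^[P.card + V.card] (weightProfile f) (hammingNorm x) := by
  rw [derivList_append, (hf.hasWeightProfile.derivList_singles V.toList V.nodup_toList
    (by simp)).derivList_legs (by simpa using hwV) P.toList P.nodup_toList (by simpa using hP)
    (by simpa using hwP) (by simpa using disjoint_left.1 hPV) x
    (by simpa [or_comm] using hx), Function.iterate_add_apply, length_toList, length_toList]

theorem IsSymmetricBF.derivList_legs_apply_zero (hf : IsSymmetricBF f) {w : Fin n}
    (l : List (Fin n)) (hl : l.Nodup) (hw : w ∉ l) :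
    derivList (l.map (leg w)) f 0 = (Δ_[1])^[l.length + l.length % 2] (weightProfile f) 0 := by
  rcases Nat.even_or_odd l.length with he | ho
  · rw [hf.hasWeightProfile.derivList_legs (notMem_empty w) l hl he hw (by simp) 0 (by simp),
      hammingNorm_zero, Nat.even_iff.1 he, add_zero]
  cases l with
  | nil => simp at ho
  | cons p l =>
    simp only [List.nodup_cons, List.mem_cons, not_or] at hl hw
    have hl' : Even l.length := by simpa [parity_simps] using ho
    have ih := hf.hasWeightProfile.derivList_legs (notMem_empty w) l hl.2 hl' hw.2 (by simp)
    rw [List.map_cons, derivList, deriv1, zero_add,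
      ih _ fun i hi => by
        simp only [empty_union, List.mem_toFinset] at hi
        simp [leg, ne_of_mem_of_not_mem hi hl.1, ne_of_mem_of_not_mem hi hw.2],
      ih 0 (by simp), hammingNorm_leg hw.1, hammingNorm_zero, List.length_cons,
      show l.length + 1 + (l.length + 1) % 2 = 2 + l.length by
        rw [Nat.even_iff] at hl'; omega,
      Function.iterate_add_apply, fwdDiff_iter_two_apply]

end SymmetricFunctions

section Hyperplanes

variable {n : ℕ} {f : BF n}

theorem IsAffineMap.exists_range_eq_hyperplane {φ : (Fin (n - 1) → ZMod 2) → Fin n → ZMod 2}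
    (hφ : IsAffineMap φ) (hinj : Function.Injective φ) (hn : 0 < n) :
    ∃ a : Fin n → ZMod 2, a ≠ 0 ∧ ∃ ε, Set.range φ = {x | a ⬝ᵥ x = ε} := by
  obtain ⟨L, b, rfl⟩ := hφ
  have hL : Module.finrank (ZMod 2) (LinearMap.range L) = n - 1 := by
    rw [LinearMap.finrank_range_of_inj fun y y' h => hinj (by simp [h]), Module.finrank_fin_fun]
  obtain ⟨μ, hμ, hle⟩ := (LinearMap.range L).exists_le_ker_of_lt_top
    (lt_top_iff_ne_top.2 fun h => by rw [h, finrank_top, Module.finrank_fin_fun] at hL; omega)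
  have hker : LinearMap.range L = LinearMap.ker μ := by
    refine Submodule.eq_of_le_of_finrank_le hle ?_
    have := Submodule.finrank_lt (s := LinearMap.ker μ) (by simpa [LinearMap.ker_eq_top] using hμ)
    rw [Module.finrank_fin_fun] at this
    omega
  set a : Fin n → ZMod 2 := fun i => μ (Pi.single i 1)
  have hμa : ∀ x, μ x = a ⬝ᵥ x := fun x => by
    conv_lhs => rw [← univ_sum_single x]
    simp only [map_sum, dotProduct, a, mul_comm]
    refine sum_congr rfl fun i _ => ?_
    rw [← smul_eq_mul, ← map_smul, ← Pi.single_smul', smul_eq_mul, mul_one]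
  refine ⟨a, fun h => hμ (LinearMap.ext fun x => by
    rw [hμa, h, zero_dotProduct, LinearMap.zero_apply]), a ⬝ᵥ b, ?_⟩
  ext x
  rw [Set.mem_ofPred_eq, ← hμa, ← hμa, ← sub_eq_zero, ← map_sub, ← LinearMap.mem_ker, ← hker]
  constructor
  · rintro ⟨y, rfl⟩
    exact ⟨y, by simp⟩
  · rintro ⟨y, hy⟩
    exact ⟨y, show L y + b = x by rw [hy, sub_add_cancel]⟩

lemma exists_even_add_eq {r w n : ℕ} (hw : 0 < w) (hwn : w ≤ n) (hrn : r + 2 ≤ n)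
    (h : Even r ∨ w < n) : ∃ u v, Even u ∧ u + v = r ∧ u < w ∧ v ≤ n - w := by
  rw [Nat.even_iff] at h
  by_cases hrw : r + w ≤ n
  · exact ⟨0, r, .zero, by omega⟩
  · refine ⟨2 * ((r + w - n + 1) / 2), r - 2 * ((r + w - n + 1) / 2), even_two_mul _, ?_⟩
    omega

theorem IsSymmetricBF.exists_derivList_ne_zero_on_hyperplane (hf : IsSymmetricBF f) {r : ℕ}
    (hdeg : degB f = r) (hrn : r + 2 ≤ n) {a : Fin n → ZMod 2} (ha : a ≠ 0)
    (hcase : Even r ∨ a ≠ fun _ => 1) (ε : ZMod 2) :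
    ∃ x l, a ⬝ᵥ x = ε ∧ (∀ d ∈ l, a ⬝ᵥ d = 0) ∧ l.length = r ∧ derivList l f x ≠ 0 := by
  set W := univ.filter (a · ≠ 0)
  have hW : ∀ i, i ∈ W ↔ a i = 1 := fun i => by
    simpa [W] using ⟨(zmod2_eq_zero_or_eq_one (a i)).resolve_left, ne_zero_of_eq_one⟩
  obtain ⟨w, hw⟩ : W.Nonempty := by
    obtain ⟨i, hi⟩ := Function.ne_iff.1 ha
    exact ⟨i, by simpa [W] using hi⟩
  have hWn : Even r ∨ W.card < n := hcase.imp_right fun h => by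
    obtain ⟨i, hi⟩ := Function.ne_iff.1 h
    simpa using card_lt_univ_of_notMem (mt (hW i).1 hi)
  obtain ⟨u, v, hu, huv, huW, hvW⟩ := exists_even_add_eq (card_pos.2 ⟨w, hw⟩)
    (by simpa using card_le_univ W) hrn hWn
  obtain ⟨P, hPW, hP⟩ := exists_subset_card_eq (s := W.erase w) (n := u)
    (by rw [card_erase_of_mem hw]; omega)
  obtain ⟨V, hVW, hV⟩ := exists_subset_card_eq (s := Wᶜ) (n := v)
    (by rw [card_compl, Fintype.card_fin]; omega)
  have hwV : w ∉ V := fun h => mem_compl.1 (hVW h) hw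
  have hwP : w ∉ P := fun h => by simpa using hPW h
  have hPV : Disjoint P V := disjoint_left.2 fun i hiP hiV =>
    mem_compl.1 (hVW hiV) (mem_of_mem_erase (hPW hiP))
  refine ⟨Pi.single w ε, P.toList.map (leg w) ++ V.toList.map fun i => Pi.single i 1,
    by simp [(hW w).1 hw], ?_, by simp [hP, hV, huv], ?_⟩
  · simp only [List.mem_append, List.mem_map, mem_toList]
    rintro d (⟨p, hp, rfl⟩ | ⟨j, hj, rfl⟩)
    · simp [leg, dotProduct_add, (hW w).1 hw, (hW p).1 (mem_of_mem_erase (hPW hp)),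
        ZModModule.add_self]
    · simpa [W] using hVW hj
  · rw [hf.derivList_legs_append_singles (hP ▸ hu) hPV hwP hwV (x := Pi.single w ε)
      fun i hi => Pi.single_eq_of_ne (by rintro rfl; simp_all) _, hP, hV, huv]
    exact hf.fwdDiff_iter_weightProfile_ne_zero hdeg (by omega) (hammingNorm_single_le_one w ε)

theorem IsSymmetricBF.not_degB_comp_lt_of_range_eq_hyperplane (hf : IsSymmetricBF f) {r : ℕ}
    (hdeg : degB f = r) (hrn : r + 2 ≤ n) {a : Fin n → ZMod 2} (ha : a ≠ 0)
    (hcase : Even r ∨ a ≠ fun _ => 1) {ε : ZMod 2} {m : ℕ}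
    {φ : (Fin m → ZMod 2) → Fin n → ZMod 2} (hφ : IsAffineMap φ)
    (hrange : Set.range φ = {x | a ⬝ᵥ x = ε}) : ¬ degB (f ∘ φ) < degB f := by
  obtain ⟨L, b, rfl⟩ := hφ
  obtain ⟨x, l, hx, hl, hlen, hne⟩ := hf.exists_derivList_ne_zero_on_hyperplane hdeg hrn ha hcase ε
  have hb : a ⬝ᵥ b = ε := by
    simpa using (hrange.subset ⟨0, by simp⟩ : b ∈ {x | a ⬝ᵥ x = ε})
  intro hlt
  refine hne (derivList_eq_zero_of_mem_range f L b (by rwa [hlen, ← hdeg])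
    (hrange ▸ hx) fun d hd => ?_)
  obtain ⟨y, hy⟩ : b + d ∈ Set.range fun y => L y + b := by
    rw [hrange]; simp [dotProduct_add, hb, hl d hd]
  exact ⟨y, add_right_cancel (hy.trans (add_comm b d))⟩

end Hyperplanes

section EvenWeightHyperplane

def evenWeightEmbedding (m : ℕ) : (Fin m → ZMod 2) →ₗ[ZMod 2] Fin (m + 1) → ZMod 2 :=
  (∑ i, LinearMap.proj i).vecCons LinearMap.id

lemma evenWeightEmbedding_apply {m : ℕ} (z : Fin m → ZMod 2) :
    evenWeightEmbedding m z = Fin.cons (∑ i, z i) z := by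
  simp only [evenWeightEmbedding, LinearMap.vecCons_apply, LinearMap.coe_sum, LinearMap.coe_proj,
    Finset.sum_apply, Function.eval, LinearMap.id_coe, id_eq]
  rfl

lemma evenWeightEmbedding_single {m : ℕ} (t : Fin m) :
    evenWeightEmbedding m (Pi.single t 1) = leg 0 t.succ := by
  ext i
  refine Fin.cases ?_ (fun i => ?_) i <;> simp [evenWeightEmbedding_apply, leg, Pi.single_apply]

lemma evenWeightEmbedding_injective (m : ℕ) : Function.Injective (evenWeightEmbedding m) :=
  fun z z' h => by simpa [evenWeightEmbedding_apply] using congrArg Fin.tail h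

lemma range_evenWeightEmbedding (m : ℕ) :
    Set.range (evenWeightEmbedding m) = {x | ∑ i, x i = 0} := by
  ext x
  simp only [Set.mem_range, Set.mem_ofPred_eq, evenWeightEmbedding_apply, Fin.sum_univ_succ]
  constructor
  · rintro ⟨y, rfl⟩
    simp [ZModModule.add_self]
  · intro h
    refine ⟨Fin.tail x, ?_⟩
    conv_rhs => rw [← Fin.cons_self_tail x]
    rw [add_eq_zero_iff_eq_neg, ZModModule.neg_eq_self] at h
    rw [h]
    rfl

variable {m : ℕ} {f : BF (m + 1)}

theorem IsSymmetricBF.anf_comp_evenWeightEmbedding (hf : IsSymmetricBF f) (S : Finset (Fin m)) :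
    anf (f ∘ evenWeightEmbedding m) S =
      (Δ_[1])^[S.card + S.card % 2] (weightProfile f) 0 := by
  have h := derivList_comp_affine f (evenWeightEmbedding m) 0
    (S.toList.map fun i => Pi.single i 1) 0
  simp only [add_zero, map_zero, List.map_map] at h
  have hmap : S.toList.map (evenWeightEmbedding m ∘ fun i => Pi.single i 1) =
      (S.toList.map Fin.succ).map (leg 0) := by
    simp [List.map_map, Function.comp_def, evenWeightEmbedding_single]
  rw [anf_eq_derivList, h, hmap, hf.derivList_legs_apply_zero _ (S.nodup_toList.map (Fin.succ_injective _))
    (by simp [Fin.succ_ne_zero]), List.length_map, length_toList]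

theorem IsSymmetricBF.degreeDropSet_evenWeight (hf : IsSymmetricBF f) {r : ℕ}
    (hdeg : degB f = r) (hr : Odd r) : DegreeDropSet f 1 {x | ∑ i, x i = 0} := by
  refine ⟨evenWeightEmbedding m, ⟨evenWeightEmbedding m, 0, by simp⟩,
    evenWeightEmbedding_injective m, range_evenWeightEmbedding m, ?_⟩
  rw [hdeg, degB_lt_iff]
  intro S hS
  by_contra hrS
  rw [hf.anf_comp_evenWeightEmbedding S] at hS
  rw [Nat.odd_iff] at hr
  have := S.card_le_univ
  simp only [Fintype.card_fin] at this
  exact hS (hf.fwdDiff_iter_weightProfile_eq_zero (by rw [hdeg]; exact_mod_cast (by omega))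
    (by omega))

end EvenWeightHyperplane

/-- STATEMENT 15: let `f` be a symmetric Boolean function in `n` variables of degree `r` with
`2 ≤ r ≤ n-2`. If `r` is even then `f` has no degree-drop hyperplane; if `r` is odd then `f`
has exactly one degree-drop linear hyperplane, namely `{x | x₁ + ⋯ + xₙ = 0}` (that is, for
nonzero `a`, the hyperplane `{x | a·x = 0}` is degree-drop iff `a` is the all-ones vector). -/
theorem stmt15 {n r : ℕ} (hr2 : 2 ≤ r) (hrn : r ≤ n - 2)
    (f : BF n)
    (hsym : ∀ π : Equiv.Perm (Fin n), ∀ x : Fin n → ZMod 2, f (x ∘ π) = f x)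
    (hdeg : degB f = (r : WithBot ℕ)) :
    (Even r → ¬ HasDDS f 1) ∧
    (Odd r → ∀ a : Fin n → ZMod 2, a ≠ 0 →
      (DegreeDropSet f 1 {x | ∑ i, a i * x i = 0} ↔ a = fun _ => 1)) := by
  have hf : IsSymmetricBF f := hsym
  have hn : r + 2 ≤ n := by omega
  refine ⟨fun hr ⟨_, φ, hφ, hinj, _, hdrop⟩ => ?_,
    fun hr a ha => ⟨fun ⟨φ, hφ, _, hrange, hdrop⟩ => ?_, ?_⟩⟩
  · obtain ⟨a, ha, ε, hrange⟩ := hφ.exists_range_eq_hyperplane hinj (by omega)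
    exact hf.not_degB_comp_lt_of_range_eq_hyperplane hdeg hn ha (.inl hr) hφ hrange hdrop
  · by_contra hne
    exact hf.not_degB_comp_lt_of_range_eq_hyperplane hdeg hn ha (.inr hne) hφ hrange hdrop
  · rintro rfl
    obtain ⟨m, rfl⟩ : ∃ m, n = m + 1 := ⟨n - 1, by omega⟩
    simpa using hf.degreeDropSet_evenWeight hdeg hr
end
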